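/- Let M(t) be the G×G matrix over ℤ[t] with entries M(t)_{x,y} = d(x·y⁻¹)·t − δ_{x,y}. Then for every x ∈ G, the power series det(M(t))·F_x(t) ∈ ℤ[[t]] is (the image of) a polynomial in ℤ[t] of degree at most |G| − 1; in particular every F_x(t) is a rational power series. -/

import Mathlib

/-- `aCoef d n x` is the sum over all `n`-tuples `(y₁, …, yₙ)` of elements of `G`
with `y₁ ⋯ yₙ = x` of the products `d y₁ ⋯ d yₙ`. -/
def aCoef {G : Type*} [Group G] [Fintype G] [DecidableEq G] (d : G → ℕ) (n : ℕ) (x : G) : ℕ :=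
  ∑ y ∈ Finset.univ.filter (fun y : Fin n → G => (List.ofFn y).prod = x), ∏ i, d (y i)

/-- The generating power series `F_x(t) = Σ_{n ≥ 0} a_n(x) tⁿ ∈ ℤ[[t]]`. -/
def genSeries {G : Type*} [Group G] [Fintype G] [DecidableEq G] (d : G → ℕ) (x : G) :
    PowerSeries ℤ :=
  PowerSeries.mk fun n => (aCoef d n x : ℤ)

lemma aCoef_zero {G : Type*} [Group G] [Fintype G] [DecidableEq G] (d : G → ℕ) (x : G) :
    aCoef d 0 x = if x = 1 then 1 else 0 := by
  unfold aCoef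
  rw [Finset.sum_filter]
  simp [eq_comm]

lemma aCoef_succ {G : Type*} [Group G] [Fintype G] [DecidableEq G] (d : G → ℕ) (n : ℕ) (x : G) :
    aCoef d (n + 1) x = ∑ w : G, d w * aCoef d n (w⁻¹ * x) := by
  unfold aCoef
  simp only [Finset.sum_filter]
  rw [← Fintype.sum_equiv (Fin.consEquiv fun _ : Fin (n+1) => G)
      (fun p : G × (Fin n → G) =>
        if (List.ofFn (Fin.cons p.1 p.2 : Fin (n+1) → G)).prod = x
        then ∏ i, d ((Fin.cons p.1 p.2 : Fin (n+1) → G) i) else 0)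
      (fun y => if (List.ofFn y).prod = x then ∏ i, d (y i) else 0)
      (fun p => rfl)]
  rw [Fintype.sum_prod_type]
  refine Finset.sum_congr rfl fun w _ => ?_
  rw [Finset.mul_sum]
  refine Finset.sum_congr rfl fun z _ => ?_
  have h1 : (List.ofFn (Fin.cons w z : Fin (n+1) → G)).prod = w * (List.ofFn z).prod := by
    rw [List.ofFn_succ]
    simp
  have h2 : (∏ i, d ((Fin.cons w z : Fin (n+1) → G) i)) = d w * ∏ i, d (z i) := by
    rw [Fin.prod_univ_succ]
    simp
  simp only [h1, h2, mul_ite, mul_zero, eq_inv_mul_iff_mul_eq]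

lemma genSeries_rec {G : Type*} [Group G] [Fintype G] [DecidableEq G] (d : G → ℕ) (x : G) :
    genSeries d x = (if x = 1 then 1 else 0) +
      PowerSeries.X * ∑ w : G, PowerSeries.C (R := ℤ) (d w) * genSeries d (w⁻¹ * x) := by
  ext n
  cases n with
  | zero =>
    simp only [map_add, genSeries, PowerSeries.coeff_mk, aCoef_zero]
    rw [PowerSeries.coeff_zero_eq_constantCoeff, map_mul]
    simp [apply_ite (PowerSeries.constantCoeff), Int.cast_ite]
  | succ n =>
    simp only [map_add, PowerSeries.coeff_succ_X_mul, genSeries, PowerSeries.coeff_mk,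
      aCoef_succ, map_sum]
    have hite : (PowerSeries.coeff (R := ℤ) (n+1)) (if x = 1 then 1 else 0) = 0 := by
      split <;> simp [PowerSeries.coeff_one]
    rw [hite, zero_add, Nat.cast_sum]
    refine Finset.sum_congr rfl fun w _ => ?_
    rw [PowerSeries.coeff_C_mul, PowerSeries.coeff_mk, Nat.cast_mul]

theorem stmt6 {G : Type*} [Group G] [Fintype G] [DecidableEq G] (d : G → ℕ)
    (M : Matrix G G (Polynomial ℤ))
    (hM : ∀ x y : G,
      M x y = Polynomial.C (d (x * y⁻¹) : ℤ) * Polynomial.X - if x = y then 1 else 0) :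
    ∀ x : G, ∃ p : Polynomial ℤ, p.natDegree ≤ Fintype.card G - 1 ∧
      (M.det : PowerSeries ℤ) * genSeries d x = (p : PowerSeries ℤ) := by
  intro x
  classical
  set φ : Polynomial ℤ →+* PowerSeries ℤ := Polynomial.coeToPowerSeries.ringHom with hφ
  set N : Matrix G G (PowerSeries ℤ) := φ.mapMatrix M with hN
  -- the key linear relation
  have hmul : N.mulVec (genSeries d) = fun y => -(if y = 1 then 1 else 0) := by
    funext z
    have hre : ∑ y : G, (PowerSeries.C (d (z * y⁻¹) : ℤ)) * genSeries d y
        = ∑ w : G, PowerSeries.C (d w : ℤ) * genSeries d (w⁻¹ * z) := by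
      refine Fintype.sum_equiv ((Equiv.inv G).trans (Equiv.mulLeft z)) _ _ fun y => ?_
      simp [mul_assoc]
    have := genSeries_rec d z
    calc N.mulVec (genSeries d) z
        = ∑ y : G, φ (M z y) * genSeries d y := by
          simp [Matrix.mulVec, dotProduct, hN]
      _ = ∑ y : G, ((PowerSeries.C (d (z * y⁻¹) : ℤ)) * PowerSeries.X * genSeries d y
            - (if z = y then 1 else 0) * genSeries d y) := by
          refine Finset.sum_congr rfl fun y _ => ?_
          rw [hM z y, map_sub, map_mul, sub_mul]
          congr 2 <;> simp [hφ, apply_ite (⇑φ)]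
      _ = PowerSeries.X * (∑ y : G, (PowerSeries.C (d (z * y⁻¹) : ℤ)) * genSeries d y) - genSeries d z := by
          rw [Finset.sum_sub_distrib, Finset.mul_sum]
          congr 1
          · exact Finset.sum_congr rfl fun y _ => by ring
          · simp [Finset.sum_ite_eq]
      _ = -(if z = 1 then 1 else 0) := by
          rw [hre]
          conv_lhs => rw [show genSeries d z = _ from this]
          ring
  -- degree bound for adjugate entries
  have hdeg : (M.adjugate x 1).natDegree ≤ Fintype.card G - 1 := by
    rw [Matrix.adjugate_apply, Matrix.det_apply]
    refine Polynomial.natDegree_sum_le_of_forall_le _ _ fun σ _ => ?_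
    have hsg : ((Equiv.Perm.sign σ : ℤˣ) •
        ∏ i, (M.updateRow 1 (Pi.single x 1)) (σ i) i).natDegree
        = (∏ i, (M.updateRow 1 (Pi.single x 1)) (σ i) i).natDegree := by
      rcases Int.units_eq_one_or (Equiv.Perm.sign σ) with h | h <;>
        simp [h, Units.smul_def]
    rw [hsg]
    refine le_trans (Polynomial.natDegree_prod_le _ _) ?_
    set a : G := σ⁻¹ 1 with ha
    rw [← Finset.add_sum_erase _ _ (Finset.mem_univ a)]
    have h0 : ((M.updateRow 1 (Pi.single x 1)) (σ a) a).natDegree = 0 := by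
      have : σ a = 1 := σ.apply_symm_apply 1
      rw [this, Matrix.updateRow_self, Pi.single_apply]
      split <;> simp
    rw [h0, zero_add]
    calc ∑ i ∈ Finset.univ.erase a, ((M.updateRow 1 (Pi.single x 1)) (σ i) i).natDegree
        ≤ ∑ _i ∈ Finset.univ.erase a, 1 := by
          refine Finset.sum_le_sum fun i hi => ?_
          have hne : σ i ≠ 1 := by
            intro h
            exact (Finset.mem_erase.mp hi).1 (by rw [ha, ← h, ← Equiv.Perm.mul_apply, inv_mul_cancel, Equiv.Perm.one_apply])
          rw [Matrix.updateRow_ne hne, hM]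
          refine le_trans (Polynomial.natDegree_sub_le _ _) ?_
          refine max_le (le_trans (Polynomial.natDegree_C_mul_le _ _)
            Polynomial.natDegree_X_le) ?_
          split <;> simp
      _ = Fintype.card G - 1 := by
          rw [Finset.sum_const, smul_eq_mul, mul_one,
            Finset.card_erase_of_mem (Finset.mem_univ a), Finset.card_univ]
  refine ⟨-(M.adjugate x 1), by simpa using hdeg, ?_⟩
  -- Cramer computation
  have key : N.det • genSeries d = fun z => -(N.adjugate z 1) := by
    calc N.det • genSeries d = (N.det • (1 : Matrix G G (PowerSeries ℤ))).mulVec (genSeries d) := by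
          rw [Matrix.smul_mulVec, Matrix.one_mulVec]
      _ = (N.adjugate * N).mulVec (genSeries d) := by rw [Matrix.adjugate_mul]
      _ = N.adjugate.mulVec (N.mulVec (genSeries d)) := by rw [← Matrix.mulVec_mulVec]
      _ = fun z => -(N.adjugate z 1) := by
          funext z
          rw [hmul, Matrix.mulVec]
          simp [dotProduct, mul_ite, Finset.sum_ite_eq]
  have hx := congrFun key x
  simp only [Pi.smul_apply, smul_eq_mul] at hx
  have hdet : N.det = φ M.det := (RingHom.map_det φ M).symm
  have hadj : N.adjugate x 1 = φ (M.adjugate x 1) := by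
    rw [hN, ← RingHom.map_adjugate]; rfl
  rw [hdet, hadj] at hx
  show φ M.det * genSeries d x = φ (-(M.adjugate x 1))
  rw [map_neg]
  exact hx
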